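/- arXiv:1703.06482 — 2 statements merged into one kernel-verified Lean document; each statement's English description precedes it below -/
import Mathlib

section
/- For integers n and k with 1 ≤ k ≤ n−2, the set {v_1, …, v_{n−1}} is a resolving set for the entire vertex set of G_{n,k}. -/
/-- Vertex set of the graph `G_{n,k}`: vertices `v_i` for `i ∈ [n]` (as `Sum.inl i`)
and `w_A` for `A` a `k`-element subset of `[n]` (as `Sum.inr A`). -/
abbrev Vnk (n k : ℕ) := Fin n ⊕ {A : Finset (Fin n) // A.card = k}

/-- The graph `G_{n,k}`: edges `w_A w_B` for all distinct `k`-subsets `A, B`,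
and `v_i w_A` whenever `i ∉ A`. -/
def Gnk (n k : ℕ) : SimpleGraph (Vnk n k) where
  Adj u v :=
    match u, v with
    | Sum.inl _, Sum.inl _ => False
    | Sum.inl i, Sum.inr A => i ∉ A.1
    | Sum.inr A, Sum.inl i => i ∉ A.1
    | Sum.inr A, Sum.inr B => A ≠ B
  symm := by
    constructor
    rintro (i | A) (j | B) h
    · exact h
    · exact h
    · exact h
    · exact fun e => h e.symm
  loopless := by
    constructor
    rintro (i | A) h
    · exact h
    · exact h rfl

/-!
Since `k ≤ n - 2`, any two vertices `v_i, v_j` have a common neighbour `w_A`, so `dist(v_i, v_j) = 2`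
for `i ≠ j`, while `dist(w_A, v_i)` is `1` or `2` according as `i ∉ A` or `i ∈ A`. Hence two distinct
vertices are resolved by `v_i` for two distinct indices `i` (for `v_j, w_A`: `j` and any index
outside `A ∪ {j}`; for `w_A, w_B`: elements of `A \ B` and of `B \ A`), and one of these is not
the last index.
-/

theorem SimpleGraph.dist_eq_two_of_adj_of_adj {V : Type*} {G : SimpleGraph V} {u v w : V}
    (hne : u ≠ v) (hnadj : ¬G.Adj u v) (huw : G.Adj u w) (hwv : G.Adj w v) : G.dist u v = 2 := by
  have h : G.edist u v = 2 :=
    edist_eq_two_iff.mpr ⟨hne, hnadj, w, (G.mem_commonNeighbors).mpr ⟨huw, hwv.symm⟩⟩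
  simp [SimpleGraph.dist, h]

theorem Finset.exists_mem_notMem_of_card_eq {α : Type*} {s t : Finset α} (hne : s ≠ t)
    (hcard : s.card = t.card) : ∃ a ∈ s, a ∉ t := by
  by_contra! hsub
  exact hne (Finset.eq_of_subset_of_card_le hsub hcard.ge)

theorem Fin.val_lt_sub_one_or_val_lt_sub_one {n : ℕ} {i j : Fin n} (hij : i ≠ j) :
    (i : ℕ) < n - 1 ∨ (j : ℕ) < n - 1 := by
  have := Fin.val_ne_of_ne hij
  omega

namespace Gnk

variable {n k : ℕ}

theorem exists_card_eq_avoiding (hkn : k + 2 ≤ n) (i j : Fin n) :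
    ∃ A : {A : Finset (Fin n) // A.card = k}, i ∉ A.1 ∧ j ∉ A.1 := by
  have hcard : k ≤ ({i, j} : Finset (Fin n))ᶜ.card := by
    have := Finset.card_le_two (a := i) (b := j)
    rw [Finset.card_compl, Fintype.card_fin]
    omega
  obtain ⟨A, hsub, hA⟩ := Finset.exists_subset_card_eq hcard
  exact ⟨⟨A, hA⟩, fun hi => Finset.mem_compl.mp (hsub hi) (by simp),
    fun hj => Finset.mem_compl.mp (hsub hj) (by simp)⟩

theorem dist_inl_inl (hkn : k + 2 ≤ n) (i j : Fin n) :
    (Gnk n k).dist (Sum.inl i) (Sum.inl j) = if i = j then 0 else 2 := by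
  split_ifs with hij
  · rw [hij, SimpleGraph.dist_self]
  obtain ⟨A, hiA, hjA⟩ := exists_card_eq_avoiding hkn i j
  exact SimpleGraph.dist_eq_two_of_adj_of_adj (by simpa using hij) id
    (w := Sum.inr A) hiA hjA

theorem dist_inr_inl (hkn : k + 2 ≤ n) (A : {A : Finset (Fin n) // A.card = k}) (i : Fin n) :
    (Gnk n k).dist (Sum.inr A) (Sum.inl i) = if i ∈ A.1 then 2 else 1 := by
  split_ifs with hiA
  · obtain ⟨B, hiB, -⟩ := exists_card_eq_avoiding hkn i i
    have hAB : A ≠ B := by rintro rfl; exact hiB hiA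
    exact SimpleGraph.dist_eq_two_of_adj_of_adj (by simp) (fun h => h hiA)
      (w := Sum.inr B) hAB hiB
  · exact SimpleGraph.dist_eq_one_iff_adj.mpr hiA

def Resolves (i : Fin n) (u u' : Vnk n k) : Prop :=
  (Gnk n k).dist u (Sum.inl i) ≠ (Gnk n k).dist u' (Sum.inl i)

theorem exists_resolves_lt_sub_one {i j : Fin n} {u u' : Vnk n k} (hij : i ≠ j)
    (hi : Resolves i u u') (hj : Resolves j u u') :
    ∃ l : Fin n, (l : ℕ) < n - 1 ∧ Resolves l u u' := by
  rcases Fin.val_lt_sub_one_or_val_lt_sub_one hij with h | h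
  exacts [⟨i, h, hi⟩, ⟨j, h, hj⟩]

theorem Resolves.symm {i : Fin n} {u u' : Vnk n k} (h : Resolves i u u') : Resolves i u' u :=
  Ne.symm h

variable (hkn : k + 2 ≤ n)
include hkn

theorem exists_resolves_inl_inl {j j' : Fin n} (hjj' : j ≠ j') :
    ∃ l : Fin n, (l : ℕ) < n - 1 ∧ Resolves l (Sum.inl j) (Sum.inl j' : Vnk n k) := by
  refine exists_resolves_lt_sub_one hjj' ?_ ?_ <;>
    simp [Resolves, dist_inl_inl hkn, hjj', hjj'.symm]

theorem exists_resolves_inl_inr (j : Fin n) (A : {A : Finset (Fin n) // A.card = k}) :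
    ∃ l : Fin n, (l : ℕ) < n - 1 ∧ Resolves l (Sum.inl j) (Sum.inr A) := by
  have hcard : (insert j A.1).card < (Finset.univ : Finset (Fin n)).card := by
    have := Finset.card_insert_le j A.1
    rw [A.2] at this
    rw [Finset.card_univ, Fintype.card_fin]
    omega
  obtain ⟨i, -, hi⟩ := Finset.exists_mem_notMem_of_card_lt_card hcard
  rw [Finset.mem_insert, not_or] at hi
  refine exists_resolves_lt_sub_one hi.1 ?_ ?_
  · simp [Resolves, dist_inl_inl hkn, dist_inr_inl hkn, hi.2, Ne.symm hi.1]
  · simp only [Resolves, dist_inl_inl hkn, dist_inr_inl hkn, if_true]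
    split_ifs <;> decide

theorem exists_resolves_inr_inr {A A' : {A : Finset (Fin n) // A.card = k}} (hAA' : A ≠ A') :
    ∃ l : Fin n, (l : ℕ) < n - 1 ∧ Resolves l (Sum.inr A) (Sum.inr A') := by
  have hne : A.1 ≠ A'.1 := Subtype.coe_ne_coe.mpr hAA'
  obtain ⟨a, haA, haA'⟩ := Finset.exists_mem_notMem_of_card_eq hne (A.2.trans A'.2.symm)
  obtain ⟨b, hbA', hbA⟩ := Finset.exists_mem_notMem_of_card_eq hne.symm (A'.2.trans A.2.symm)
  have hab : a ≠ b := by rintro rfl; exact hbA haA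
  refine exists_resolves_lt_sub_one hab ?_ ?_ <;>
    simp [Resolves, dist_inr_inl hkn, haA, haA', hbA, hbA']

end Gnk

/-- For `1 ≤ k ≤ n - 2`, the set `{v_1, …, v_{n-1}}` (all `v_i` except the last one)
is a resolving set for the entire vertex set of `G_{n,k}`. -/
theorem stmt3 (n k : ℕ) (hk : 1 ≤ k) (hkn : k ≤ n - 2) :
    ∀ u u' : Vnk n k, u ≠ u' →
      ∃ i : Fin n, (i : ℕ) < n - 1 ∧
        (Gnk n k).dist u (Sum.inl i) ≠ (Gnk n k).dist u' (Sum.inl i) := by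
  have hkn' : k + 2 ≤ n := by omega
  rintro (j | A) (j' | A') hne
  · exact Gnk.exists_resolves_inl_inl hkn' (hne <| congrArg Sum.inl ·)
  · exact Gnk.exists_resolves_inl_inr hkn' j A'
  · obtain ⟨i, hi, hres⟩ := Gnk.exists_resolves_inl_inr hkn' j' A
    exact ⟨i, hi, hres.symm⟩
  · exact Gnk.exists_resolves_inr_inr hkn' (hne <| congrArg Sum.inr ·)
end

section
/- For every integer n ≥ 1, all x, x′ ∈ L_n and all y ∈ W_n, the graph distance in G_n satisfies: dist(a_x, b_y) = 1 if x is a prefix of y and dist(a_x, b_y) = 3 otherwise; dist(a_x, c_y) = 2; dist(a_x, d_{x′}) = 3; and for x ≠ x′, dist(a_x, a_{x′}) = 2 if one of x, x′ is a prefix of the other and dist(a_x, a_{x′}) = 4 otherwise. -/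
/-! A vertex function `f` that grows by at most one along every edge satisfies
`f v ≤ f u + dist u v`. The claimed distances from `a_x` form such a function: the only edge
where this is not immediate is `a_x' b_y`, and there, if `x` is also a prefix of `y`, then `x`
and `x'` are comparable. So the claimed values are lower bounds, and they are attained by
explicit walks, since every word of `L_n` extends to a word of `W_n` by padding with zeros. -/

/-- `L n`: binary words of length at most `n` that are empty or end in `1` (`true`). -/
abbrev Ln (n : ℕ) := {x : List Bool // x.length ≤ n ∧ (x = [] ∨ x.getLast? = some true)}

/-- `W n`: binary words of length exactly `n`. -/
abbrev Wn (n : ℕ) := {y : List Bool // y.length = n}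

/-- Vertex set of the graph `G_n`: a copy of `L n` (the `a` vertices), two copies of `W n`
(the `b` and `c` vertices) and another copy of `L n` (the `d` vertices). -/
abbrev VGn (n : ℕ) := Ln n ⊕ Wn n ⊕ Wn n ⊕ Ln n

def va {n : ℕ} (x : Ln n) : VGn n := Sum.inl x
def vb {n : ℕ} (y : Wn n) : VGn n := Sum.inr (Sum.inl y)
def vc {n : ℕ} (y : Wn n) : VGn n := Sum.inr (Sum.inr (Sum.inl y))
def vd {n : ℕ} (x : Ln n) : VGn n := Sum.inr (Sum.inr (Sum.inr x))

/-- The graph `G_n`: edges `b_y c_z` for all `y, z ∈ W n`, `a_x b_y` whenever `x` is a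
prefix of `y`, and `d_x c_y` whenever `x` is a prefix of `y`. -/
def Gn (n : ℕ) : SimpleGraph (VGn n) where
  Adj u v :=
    match u, v with
    | Sum.inl x, Sum.inr (Sum.inl y) => x.1 <+: y.1
    | Sum.inr (Sum.inl y), Sum.inl x => x.1 <+: y.1
    | Sum.inr (Sum.inl _), Sum.inr (Sum.inr (Sum.inl _)) => True
    | Sum.inr (Sum.inr (Sum.inl _)), Sum.inr (Sum.inl _) => True
    | Sum.inr (Sum.inr (Sum.inl y)), Sum.inr (Sum.inr (Sum.inr x)) => x.1 <+: y.1
    | Sum.inr (Sum.inr (Sum.inr x)), Sum.inr (Sum.inr (Sum.inl y)) => x.1 <+: y.1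
    | _, _ => False
  symm := by
    constructor
    rintro (x | y | z | w) (x' | y' | z' | w') h <;> exact h
  loopless := by
    constructor
    rintro (x | y | z | w) h <;> exact h

namespace SimpleGraph

variable {V : Type*} {G : SimpleGraph V} {f : V → ℕ} {u v : V}

theorem Walk.apply_le_apply_add_length (hf : ∀ a b, G.Adj a b → f b ≤ f a + 1)
    (p : G.Walk u v) : f v ≤ f u + p.length := by
  induction p with
  | nil => simp
  | cons h _ ih =>
    rw [Walk.length_cons]
    have := hf _ _ h
    omega

theorem Reachable.apply_le_apply_add_dist (hf : ∀ a b, G.Adj a b → f b ≤ f a + 1)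
    (h : G.Reachable u v) : f v ≤ f u + G.dist u v := by
  obtain ⟨p, hp⟩ := h.exists_walk_length_eq_dist
  exact hp ▸ p.apply_le_apply_add_length hf

theorem dist_eq_of_walk_length_le (hf : ∀ a b, G.Adj a b → f b ≤ f a + 1) (hu : f u = 0)
    (p : G.Walk u v) (hp : p.length ≤ f v) : G.dist u v = f v := by
  have hlow := p.reachable.apply_le_apply_add_dist hf
  have hup := G.dist_le p
  omega

end SimpleGraph

open SimpleGraph

namespace Gn

variable {n : ℕ}

def pad (x : Ln n) : Wn n :=
  ⟨x.1 ++ List.replicate (n - x.1.length) false, by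
    rw [List.length_append, List.length_replicate]; have := x.2.1; omega⟩

theorem prefix_pad (x : Ln n) : x.1 <+: (pad x).1 := List.prefix_append _ _

theorem adj_va_vb {x : Ln n} {y : Wn n} (h : x.1 <+: y.1) : (Gn n).Adj (va x) (vb y) := h

theorem adj_vb_vc (y z : Wn n) : (Gn n).Adj (vb y) (vc z) := trivial

theorem adj_vc_vd {x : Ln n} {y : Wn n} (h : x.1 <+: y.1) : (Gn n).Adj (vc y) (vd x) := h

def distFromA (x : Ln n) : VGn n → ℕ
  | Sum.inl x' => if x' = x then 0 else if x.1 <+: x'.1 ∨ x'.1 <+: x.1 then 2 else 4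
  | Sum.inr (Sum.inl y) => if x.1 <+: y.1 then 1 else 3
  | Sum.inr (Sum.inr (Sum.inl _)) => 2
  | Sum.inr (Sum.inr (Sum.inr _)) => 3

theorem distFromA_va_vb {x x' : Ln n} {y : Wn n} (h : x'.1 <+: y.1) :
    distFromA x (va x') ≤ distFromA x (vb y) + 1 ∧
      distFromA x (vb y) ≤ distFromA x (va x') + 1 := by
  by_cases hxy : x.1 <+: y.1
  · have hb : distFromA x (vb y) = 1 := if_pos hxy
    have ha : distFromA x (va x') ≤ 2 := by
      have hcomp := List.prefix_or_prefix_of_prefix hxy h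
      simp only [distFromA, va, hcomp, if_true]
      split_ifs <;> omega
    omega
  · have hb : distFromA x (vb y) = 3 := if_neg hxy
    have hne : x' ≠ x := by rintro rfl; exact hxy h
    have ha : 2 ≤ distFromA x (va x') ∧ distFromA x (va x') ≤ 4 := by
      simp only [distFromA, va, hne, if_false]
      split_ifs <;> omega
    omega

theorem distFromA_adj (x : Ln n) (u v : VGn n) (h : (Gn n).Adj u v) :
    distFromA x v ≤ distFromA x u + 1 := by
  rcases u with x₁ | y₁ | y₁ | x₁ <;> rcases v with x₂ | y₂ | y₂ | x₂
  all_goals first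
    | exact (h : False).elim
    | exact (distFromA_va_vb h).2
    | exact (distFromA_va_vb h).1
    | (simp only [distFromA]; omega)
    | (simp only [distFromA]; split_ifs <;> omega)

theorem dist_va_eq (x : Ln n) {v : VGn n} {k : ℕ} (p : (Gn n).Walk (va x) v)
    (hp : p.length = k) (hv : distFromA x v = k) : (Gn n).dist (va x) v = k :=
  hv ▸ dist_eq_of_walk_length_le (distFromA_adj x) (if_pos rfl) p (hp.trans hv.symm).le

theorem exists_common_extension {x x' : Ln n} (h : x.1 <+: x'.1 ∨ x'.1 <+: x.1) :
    ∃ z : Wn n, x.1 <+: z.1 ∧ x'.1 <+: z.1 := by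
  rcases h with h | h
  · exact ⟨pad x', h.trans (prefix_pad x'), prefix_pad x'⟩
  · exact ⟨pad x, prefix_pad x, h.trans (prefix_pad x)⟩

end Gn

open Gn

theorem stmt9_general (n : ℕ) (x x' : Ln n) (y : Wn n) :
    ((x.1 <+: y.1 → (Gn n).dist (va x) (vb y) = 1) ∧
     (¬ x.1 <+: y.1 → (Gn n).dist (va x) (vb y) = 3)) ∧
    (Gn n).dist (va x) (vc y) = 2 ∧
    (Gn n).dist (va x) (vd x') = 3 ∧
    (x ≠ x' →
      ((x.1 <+: x'.1 ∨ x'.1 <+: x.1) → (Gn n).dist (va x) (va x') = 2) ∧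
      (¬ (x.1 <+: x'.1 ∨ x'.1 <+: x.1) → (Gn n).dist (va x) (va x') = 4)) := by
  have hx := adj_va_vb (prefix_pad x)
  refine ⟨⟨fun h => ?_, fun h => ?_⟩, ?_, ?_, fun hne => ⟨fun h => ?_, fun h => ?_⟩⟩
  · exact dist_va_eq x (.cons (adj_va_vb h) .nil) rfl (by simp [distFromA, vb, h])
  · exact dist_va_eq x (.cons hx (.cons (adj_vb_vc _ y) (.cons (adj_vb_vc y y).symm .nil))) rfl
      (by simp [distFromA, vb, h])
  · exact dist_va_eq x (.cons hx (.cons (adj_vb_vc _ y) .nil)) rfl rfl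
  · exact dist_va_eq x
      (.cons hx (.cons (adj_vb_vc _ (pad x')) (.cons (adj_vc_vd (prefix_pad x')) .nil))) rfl rfl
  · obtain ⟨z, hxz, hx'z⟩ := exists_common_extension h
    exact dist_va_eq x (.cons (adj_va_vb hxz) (.cons (adj_va_vb hx'z).symm .nil)) rfl
      (by simp [distFromA, va, hne.symm, h])
  · exact dist_va_eq x (.cons hx (.cons (adj_vb_vc _ (pad x)) (.cons (adj_vb_vc _ _).symm
      (.cons (adj_va_vb (prefix_pad x')).symm .nil)))) rfl (by simp [distFromA, va, hne.symm, h])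

/-- Distances from `a` vertices in `G_n` (`n ≥ 1`): `dist(a_x, b_y)` is `1` or `3`
according to whether `x` is a prefix of `y`; `dist(a_x, c_y) = 2`; `dist(a_x, d_x') = 3`;
and for `x ≠ x'`, `dist(a_x, a_x')` is `2` or `4` according to whether one of `x, x'`
is a prefix of the other. -/
theorem stmt9 (n : ℕ) (hn : 1 ≤ n) (x x' : Ln n) (y : Wn n) :
    ((x.1 <+: y.1 → (Gn n).dist (va x) (vb y) = 1) ∧
     (¬ x.1 <+: y.1 → (Gn n).dist (va x) (vb y) = 3)) ∧
    (Gn n).dist (va x) (vc y) = 2 ∧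
    (Gn n).dist (va x) (vd x') = 3 ∧
    (x ≠ x' →
      ((x.1 <+: x'.1 ∨ x'.1 <+: x.1) → (Gn n).dist (va x) (va x') = 2) ∧
      (¬ (x.1 <+: x'.1 ∨ x'.1 <+: x.1) → (Gn n).dist (va x) (va x') = 4)) :=
  stmt9_general n x x' y
end
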